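/- arXiv:1811.06734 — 2 statements merged into one kernel-verified Lean document; each statement's English description precedes it below -/
import Mathlib

section
/- The exponential generating function of the central Fubini-like numbers satisfies, as an identity of formal power series in ℝ[[t]]: (1 − 2·S(t)) · ∑_{n≥0} 𝔠_n·t^n/n! = 1, where S(t) := ∑_{m≥0} t^{2m+1}/(2^{2m+1}·(2m+1)!) is the formal power series of sinh(t/2); i.e., ∑_{n≥0} 𝔠_n·t^n/n! = 1/(1 − 2·sinh(t/2)). -/
open Nat Finset

/-- Central factorial numbers of the second kind. -/
noncomputable def centralT (n k : ℕ) : ℝ :=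
  (1 / (k ! : ℝ)) * ∑ j ∈ Finset.range (k + 1),
    (-1 : ℝ) ^ j * (k.choose j : ℝ) * ((k : ℝ) / 2 - (j : ℝ)) ^ n

/-- Central Fubini-like polynomials. -/
noncomputable def centralFubini (n : ℕ) (x : ℝ) : ℝ :=
  ∑ k ∈ Finset.range (n + 1), (k ! : ℝ) * centralT n k * x ^ k

/-- Central Fubini-like numbers. -/
noncomputable def centralFubiniNum (n : ℕ) : ℝ := centralFubini n 1

/-- Formal power series of `sinh (t/2)`:  `∑_{m≥0} t^(2m+1)/(2^(2m+1)·(2m+1)!)`. -/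
noncomputable def sinhHalf : PowerSeries ℝ :=
  PowerSeries.mk fun m => if m % 2 = 1 then 1 / (2 ^ m * (m ! : ℝ)) else 0

/-!
Since `2 sinh (t/2) = e^{t/2} - e^{-t/2}`, the binomial theorem gives
`(2 sinh (t/2))^k = ∑ⱼ (-1)^j (k choose j) e^{(k/2 - j) t}`, so the `n`-th coefficient of
`(2 sinh (t/2))^k` is `k! T(n,k) / n!`. Hence the exponential generating function of the `𝔠_n` is
the geometric series `∑ₖ (2 sinh (t/2))^k`, which converges formally because `2 sinh (t/2)` has no
constant term, and is therefore inverse to `1 - 2 sinh (t/2)`.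
-/

namespace PowerSeries

section Geometric

variable {R : Type*} [CommRing R] {f : R⟦X⟧}

theorem coeff_pow_eq_zero_of_lt (hf : constantCoeff f = 0) {n k : ℕ} (h : n < k) :
    coeff n (f ^ k) = 0 :=
  coeff_of_lt_order n <| (Nat.cast_lt.mpr h).trans_le (le_order_pow_of_constantCoeff_eq_zero k hf)

theorem sum_range_coeff_pow_eq_coeff_sum_range_pow (hf : constantCoeff f = 0) {n N : ℕ}
    (h : n < N) : ∑ k ∈ range (n + 1), coeff n (f ^ k) = coeff n (∑ k ∈ range N, f ^ k) := by
  rw [map_sum]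
  refine sum_subset (range_subset_range.mpr h) fun k hkN hkn => ?_
  exact coeff_pow_eq_zero_of_lt hf (by simp_all)

/-- The geometric series `∑ₖ fᵏ`, which makes sense as a power series because only the terms
with `k ≤ n` contribute to its `n`-th coefficient. -/
theorem one_sub_mul_mk_sum_coeff_pow (hf : constantCoeff f = 0) :
    (1 - f) * mk (fun n => ∑ k ∈ range (n + 1), coeff n (f ^ k)) = 1 := by
  ext n
  set F := mk fun n => ∑ k ∈ range (n + 1), coeff n (f ^ k)
  set G := ∑ k ∈ range (n + 1), f ^ k
  have hFG : n < (F - G).order := (Nat.cast_lt.mpr n.lt_succ_self).trans_le <|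
    nat_le_order _ _ fun q hq => by
      rw [map_sub, coeff_mk, sum_range_coeff_pow_eq_coeff_sum_range_pow hf hq, sub_self]
  calc coeff n ((1 - f) * F) = coeff n ((1 - f) * G) + coeff n ((1 - f) * (F - G)) := by
        rw [← map_add, ← mul_add, add_sub_cancel]
    _ = coeff n (1 - f ^ (n + 1)) := by
        rw [mul_neg_geom_sum, coeff_mul_of_lt_order hFG, add_zero]
    _ = coeff n 1 := by rw [map_sub, coeff_pow_eq_zero_of_lt hf n.lt_succ_self, sub_zero]

end Geometric

section Exp

variable {A : Type*} [CommRing A] [Algebra ℚ A]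

theorem rescale_exp_pow (a : A) (k : ℕ) : rescale a (exp A) ^ k = rescale (k * a) (exp A) := by
  rw [← map_pow, exp_pow_eq_rescale_exp, rescale_rescale]

theorem rescale_exp_sub_rescale_exp_pow (a b : A) (k : ℕ) :
    (rescale a (exp A) - rescale b (exp A)) ^ k =
      ∑ j ∈ range (k + 1),
        C ((-1 : A) ^ j * k.choose j) * rescale ((k - j) * a + j * b) (exp A) := by
  rw [sub_eq_neg_add, add_pow]
  refine sum_congr rfl fun j hj => ?_
  rw [neg_pow, rescale_exp_pow, rescale_exp_pow, Nat.cast_sub (mem_range_succ_iff.mp hj),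
    add_comm, ← exp_mul_exp_eq_exp_add, map_mul, map_pow, map_neg, map_one, map_natCast]
  ring

end Exp

theorem coeff_rescale_exp {K : Type*} [Field K] [CharZero K] (a : K) (n : ℕ) :
    coeff n (rescale a (exp K)) = a ^ n / n ! := by
  simp [coeff_exp, div_eq_mul_inv]

end PowerSeries

open PowerSeries

theorem two_mul_sinhHalf :
    C (R := ℝ) 2 * sinhHalf = rescale (1 / 2) (exp ℝ) - rescale (-(1 / 2)) (exp ℝ) := by
  ext m
  rw [coeff_C_mul, sinhHalf, coeff_mk, map_sub, coeff_rescale_exp, coeff_rescale_exp]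
  rcases Nat.even_or_odd m with hm | hm
  · simp [Nat.even_iff.mp hm, hm.neg_pow]
  · simp only [Nat.odd_iff.mp hm, if_true, hm.neg_pow, one_div, inv_pow]
    ring

theorem constantCoeff_two_mul_sinhHalf : constantCoeff (C (R := ℝ) 2 * sinhHalf) = 0 := by
  simp [sinhHalf, ← coeff_zero_eq_constantCoeff_apply]

theorem coeff_two_mul_sinhHalf_pow (n k : ℕ) :
    coeff n ((C (R := ℝ) 2 * sinhHalf) ^ k) = k ! * centralT n k / n ! := by
  rw [centralT, ← mul_assoc, mul_one_div_cancel (by positivity), one_mul, sum_div,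
    two_mul_sinhHalf, rescale_exp_sub_rescale_exp_pow, map_sum]
  refine sum_congr rfl fun j _ => ?_
  rw [coeff_C_mul, coeff_rescale_exp]
  ring

theorem centralFubiniNum_div_factorial (n : ℕ) :
    centralFubiniNum n / n ! = ∑ k ∈ range (n + 1), coeff n ((C (R := ℝ) 2 * sinhHalf) ^ k) := by
  simp [centralFubiniNum, centralFubini, coeff_two_mul_sinhHalf_pow, sum_div]

theorem central_fubini_num_egf :
    (1 - PowerSeries.C (R := ℝ) 2 * sinhHalf) *
      PowerSeries.mk (fun n => centralFubiniNum n / (n ! : ℝ)) = 1 := by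
  simp_rw [centralFubiniNum_div_factorial]
  exact one_sub_mul_mk_sum_coeff_pow constantCoeff_two_mul_sinhHalf
end

section
/- For every nonnegative integer n and every real number x, 𝔠_n(x) = ∑_{k=0}^{n} D^n_t[(2x·sinh(t/2))^k]|_{t=0}, where D^n_t[f]|_{t=0} denotes the n-th derivative of the real function t ↦ f(t) evaluated at t = 0 (the terms with k > n vanish, so the sum may be truncated at k = n). -/
open Nat Finset

/-! Expanding `(2 sinh (t/2))^k = (e^{t/2} - e^{-t/2})^k` by the binomial theorem writes it as
`∑ⱼ (-1)^j C(k,j) e^{(k/2 - j) t}`, a combination of exponentials; differentiating `n` times at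
`t = 0` turns each exponential `e^{c t}` into `c^n`, which gives exactly `k! T(n,k)`. -/

theorem iteratedDeriv_sum_mul_exp_const_mul {ι : Type*} (s : Finset ι) (a c : ι → ℝ) (n : ℕ)
    (t : ℝ) :
    iteratedDeriv n (fun u => ∑ i ∈ s, a i * Real.exp (c i * u)) t =
      ∑ i ∈ s, a i * c i ^ n * Real.exp (c i * t) := by
  rw [iteratedDeriv_fun_sum fun i _ => by fun_prop]
  simp only [iteratedDeriv_const_mul_field, iteratedDeriv_exp_const_mul, mul_assoc]

theorem two_mul_sinh_half_pow (k : ℕ) (t : ℝ) :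
    (2 * Real.sinh (t / 2)) ^ k =
      ∑ j ∈ range (k + 1),
        (-1 : ℝ) ^ j * k.choose j * Real.exp (((k : ℝ) / 2 - j) * t) := by
  have h : 2 * Real.sinh (t / 2) = -Real.exp (-(t / 2)) + Real.exp (t / 2) := by
    rw [Real.sinh_eq]; ring
  rw [h, add_pow]
  refine sum_congr rfl fun j hj => ?_
  have hjk : j ≤ k := Nat.lt_succ_iff.mp (mem_range.mp hj)
  have he : Real.exp (-(t / 2)) ^ j * Real.exp (t / 2) ^ (k - j) =
      Real.exp (((k : ℝ) / 2 - j) * t) := by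
    rw [← Real.exp_nat_mul, ← Real.exp_nat_mul, ← Real.exp_add, Nat.cast_sub hjk]
    ring_nf
  rw [neg_pow]
  linear_combination (-1 : ℝ) ^ j * k.choose j * he

theorem factorial_mul_centralT (n k : ℕ) :
    (k ! : ℝ) * centralT n k =
      ∑ j ∈ range (k + 1), (-1 : ℝ) ^ j * k.choose j * ((k : ℝ) / 2 - j) ^ n := by
  rw [centralT, ← mul_assoc, mul_one_div_cancel (by positivity), one_mul]

theorem iteratedDeriv_two_mul_sinh_half_pow_zero (n k : ℕ) (x : ℝ) :
    iteratedDeriv n (fun t : ℝ => (2 * x * Real.sinh (t / 2)) ^ k) 0 =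
      (k ! : ℝ) * centralT n k * x ^ k := by
  have hexp : (fun t : ℝ => (2 * x * Real.sinh (t / 2)) ^ k) = fun t =>
      ∑ j ∈ range (k + 1),
        x ^ k * ((-1 : ℝ) ^ j * k.choose j) * Real.exp (((k : ℝ) / 2 - j) * t) := by
    funext t
    rw [mul_comm 2 x, mul_assoc, mul_pow, two_mul_sinh_half_pow, mul_sum]
    simp only [mul_assoc]
  rw [hexp, iteratedDeriv_sum_mul_exp_const_mul, factorial_mul_centralT, sum_mul]
  simp only [mul_zero, Real.exp_zero, mul_one]
  exact sum_congr rfl fun j _ => by ring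

theorem central_fubini_deriv_repr (n : ℕ) (x : ℝ) :
    centralFubini n x =
      ∑ k ∈ Finset.range (n + 1),
        iteratedDeriv n (fun t : ℝ => (2 * x * Real.sinh (t / 2)) ^ k) 0 := by
  simp only [centralFubini, iteratedDeriv_two_mul_sinh_half_pow_zero]
end
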